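/- Let l = 2m−1 and suppose both coefficient vectors are symmetric: w_j = w_{l+1−j} and w̃_j = w̃_{l+1−j} for j = 1,…,m−1. If D = D̃, then w_j = w̃_j for all j = 1,…,l. -/

import Mathlib

open Polynomial

noncomputable def psi : ℕ → Polynomial ℂ
  | 0 => 0
  | 1 => 1
  | (n + 2) => Polynomial.X * psi (n + 1) - psi n

noncomputable def Dpoly (l m : ℕ) (w : ℕ → ℂ) : Polynomial ℂ :=
  psi m * (psi (l - m + 2) +
      ∑ j ∈ Finset.Icc 1 (l - m + 1), Polynomial.C (w (l + 1 - j)) * psi j) +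
  psi (l - m + 1) *
    (-psi (m - 1) + ∑ j ∈ Finset.Icc 1 (m - 1), Polynomial.C (w j) * psi j)

/-!
For `l = 2m - 1` the two products in `D` share the factor `ψ_m`, and
`D = ψ_m (ψ_{m+1} - ψ_{m-1} + ∑_{j ≤ m} c_j ψ_j)` with `c_m = w_m` and
`c_j = w_j + w_{l+1-j}` for `j < m`. Since `ψ_{j+1}` has degree `j`, the `ψ_j` (`j ≥ 1`) are
linearly independent, so `D` determines every `c_j`. Symmetry makes `c_j = 2 w_j` for `j < m`,
which recovers `w_1, …, w_m`, and symmetry again gives the remaining `w_j`.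
-/

theorem degree_psi_succ : ∀ n : ℕ, (psi (n + 1)).degree = n
  | 0 => by simp [psi]
  | 1 => by simp [psi]
  | n + 2 => by
    have hX : (X * psi (n + 2)).degree = ↑(n + 2) := by
      rw [X_mul, degree_mul_X, degree_psi_succ (n + 1)]; rfl
    have hlt : (psi (n + 1)).degree < (X * psi (n + 2)).degree := by
      rw [hX, degree_psi_succ n]; exact_mod_cast Nat.lt_add_of_pos_right two_pos
    rw [psi, degree_sub_eq_left_of_degree_lt hlt, hX]

theorem psi_ne_zero {n : ℕ} (hn : 1 ≤ n) : psi n ≠ 0 := by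
  obtain ⟨k, rfl⟩ := Nat.exists_eq_add_of_le' hn
  exact ne_zero_of_degree_gt (n := ⊥) (by rw [degree_psi_succ]; exact WithBot.bot_lt_coe k)

noncomputable def psiSequence : Polynomial.Sequence ℂ where
  elems' n := psi (n + 1)
  degree_eq' := degree_psi_succ

theorem linearIndepOn_psi : LinearIndepOn ℂ psi (Set.Ici 1) := by
  have hcomp : (fun j : Set.Ici 1 => psi j) =
      (psiSequence : ℕ → ℂ[X]) ∘ fun j : Set.Ici 1 => (j : ℕ) - 1 :=
    funext fun j => by
      show psi j = psi (j - 1 + 1)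
      rw [Nat.sub_add_cancel j.2]
  rw [LinearIndepOn, hcomp]
  refine psiSequence.linearIndependent.comp _ fun i j hij => Subtype.ext ?_
  have hi : 1 ≤ (i : ℕ) := i.2
  have hj : 1 ≤ (j : ℕ) := j.2
  have : (i : ℕ) - 1 = (j : ℕ) - 1 := hij
  omega

theorem eq_of_sum_C_mul_psi_eq {s : Finset ℕ} (hs : ∀ j ∈ s, 1 ≤ j) {a b : ℕ → ℂ}
    (h : ∑ j ∈ s, C (a j) * psi j = ∑ j ∈ s, C (b j) * psi j) : ∀ j ∈ s, a j = b j := by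
  have hsub := linearIndepOn_iff'.mp linearIndepOn_psi s (a - b) hs
    (by simp only [Pi.sub_apply, sub_smul, Finset.sum_sub_distrib, smul_eq_C_mul, h, sub_self])
  exact fun j hj => sub_eq_zero.mp (hsub j hj)

def foldedCoeff (m : ℕ) (w : ℕ → ℂ) (j : ℕ) : ℂ :=
  if j = m then w m else w j + w (2 * m - j)

theorem Dpoly_two_mul_sub_one {m : ℕ} (hm : 1 ≤ m) (w : ℕ → ℂ) :
    Dpoly (2 * m - 1) m w =
      psi m * (psi (m + 1) - psi (m - 1) + ∑ j ∈ Finset.Icc 1 m, C (foldedCoeff m w j) * psi j) := by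
  obtain ⟨n, rfl⟩ := Nat.exists_eq_add_of_le' hm
  have hfold : ∑ j ∈ Finset.Icc 1 n, C (foldedCoeff (n + 1) w j) * psi j =
      ∑ j ∈ Finset.Icc 1 n, C (w (2 * (n + 1) - 1 + 1 - j)) * psi j +
        ∑ j ∈ Finset.Icc 1 n, C (w j) * psi j := by
    rw [← Finset.sum_add_distrib]
    refine Finset.sum_congr rfl fun j hj => ?_
    rw [Finset.mem_Icc] at hj
    rw [foldedCoeff, if_neg (by omega), show 2 * (n + 1) - 1 + 1 - j = 2 * (n + 1) - j by omega,
      C_add, add_mul, add_comm]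
  have htop : 2 * (n + 1) - 1 + 1 - (n + 1) = n + 1 := by omega
  rw [Dpoly, show 2 * (n + 1) - 1 - (n + 1) + 2 = n + 2 by omega,
    show 2 * (n + 1) - 1 - (n + 1) + 1 = n + 1 by omega, Nat.add_sub_cancel,
    Finset.sum_Icc_succ_top (by omega), Finset.sum_Icc_succ_top (by omega), hfold, htop,
    foldedCoeff, if_pos rfl]
  ring

theorem foldedCoeff_eq_of_Dpoly_eq {m : ℕ} (hm : 1 ≤ m) {w wt : ℕ → ℂ}
    (hD : Dpoly (2 * m - 1) m w = Dpoly (2 * m - 1) m wt) :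
    ∀ j ∈ Finset.Icc 1 m, foldedCoeff m w j = foldedCoeff m wt j := by
  rw [Dpoly_two_mul_sub_one hm, Dpoly_two_mul_sub_one hm, mul_right_inj' (psi_ne_zero hm),
    add_right_inj] at hD
  exact eq_of_sum_C_mul_psi_eq (fun j hj => (Finset.mem_Icc.mp hj).1) hD

theorem foldedCoeff_eq_two_mul {m : ℕ} {w : ℕ → ℂ}
    (hsym : ∀ j, 1 ≤ j → j ≤ m - 1 → w j = w (2 * m - 1 + 1 - j)) {j : ℕ} (hj : 1 ≤ j)
    (hjm : j < m) : foldedCoeff m w j = 2 * w j := by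
  rw [foldedCoeff, if_neg hjm.ne, show 2 * m - j = 2 * m - 1 + 1 - j by omega,
    ← hsym j hj (by omega), two_mul]

theorem uniqueness_symmetric (l m : ℕ) (hm : 1 ≤ m) (hl : l = 2 * m - 1)
    (w wt : ℕ → ℂ)
    (hsym : ∀ j, 1 ≤ j → j ≤ m - 1 → w j = w (l + 1 - j))
    (hsymt : ∀ j, 1 ≤ j → j ≤ m - 1 → wt j = wt (l + 1 - j))
    (hD : Dpoly l m w = Dpoly l m wt) :
    ∀ j, 1 ≤ j → j ≤ l → w j = wt j := by
  subst hl
  have hfold := foldedCoeff_eq_of_Dpoly_eq hm hD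
  have hlow : ∀ j, 1 ≤ j → j ≤ m → w j = wt j := by
    intro j hj hjm
    have hj' := hfold j (Finset.mem_Icc.mpr ⟨hj, hjm⟩)
    rcases hjm.eq_or_lt with rfl | hlt
    · simpa only [foldedCoeff, if_pos] using hj'
    · rw [foldedCoeff_eq_two_mul hsym hj hlt, foldedCoeff_eq_two_mul hsymt hj hlt] at hj'
      exact mul_left_cancel₀ two_ne_zero hj'
  intro j hj hjl
  rcases le_or_gt j m with hjm | hmj
  · exact hlow j hj hjm
  · have hrefl : 2 * m - 1 + 1 - (2 * m - 1 + 1 - j) = j := by omega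
    have hw := hsym (2 * m - 1 + 1 - j) (by omega) (by omega)
    have hwt := hsymt (2 * m - 1 + 1 - j) (by omega) (by omega)
    rw [hrefl] at hw hwt
    rw [← hw, ← hwt]
    exact hlow _ (by omega) (by omega)
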